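/- Let C be a ZMod p-submodule of (Fin k → ZMod p), and let σ be a permutation of Ω with σ * H_C * σ⁻¹ = H_C. Let w₀ be the minimum Hamming weight among the nonzero elements of C. If v ∈ C is nonzero with Hamming weight w₀, then σ * g_v * σ⁻¹ = g_{v'} for some nonzero v' ∈ C whose Hamming weight is also w₀. -/

import Mathlib

def gperm {p k : ℕ} (v : Fin k → ZMod p) : Equiv.Perm (Fin k × ZMod p) :=
  Equiv.prodShear (Equiv.refl (Fin k)) (fun i => Equiv.addRight (v i))

def Hsub {p k : ℕ} (C : Submodule (ZMod p) (Fin k → ZMod p)) :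
    Subgroup (Equiv.Perm (Fin k × ZMod p)) where
  carrier := {g | ∃ v ∈ C, g = gperm v}
  one_mem' := ⟨0, C.zero_mem, by ext ⟨i, x⟩ <;> simp [gperm]⟩
  mul_mem' := by
    rintro g h ⟨v, hv, rfl⟩ ⟨w, hw, rfl⟩
    refine ⟨v + w, C.add_mem hv hw, ?_⟩
    ext ⟨i, x⟩ <;> simp [gperm] <;> ring
  inv_mem' := by
    rintro g ⟨v, hv, rfl⟩
    refine ⟨-v, C.neg_mem hv, ?_⟩
    have h1 : gperm v * gperm (-v) = 1 := by ext ⟨i, x⟩ <;> simp [gperm]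
    exact inv_eq_of_mul_eq_one_right h1

def affineEquiv {p : ℕ} (a : (ZMod p)ˣ) (b : ZMod p) : Equiv.Perm (ZMod p) where
  toFun x := (a : ZMod p) * x + b
  invFun y := ((a⁻¹ : (ZMod p)ˣ) : ZMod p) * (y - b)
  left_inv x := by simp
  right_inv y := by simp

def sigmaPerm {p k : ℕ} (a : Fin k → (ZMod p)ˣ) (b : Fin k → ZMod p)
    (π : Equiv.Perm (Fin k)) : Equiv.Perm (Fin k × ZMod p) :=
  Equiv.prodShear π (fun i => affineEquiv (a i) (b i))

/-! Conjugation preserves the size of the support of a permutation, and the support of `g_v` is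
the union of the `p`-element blocks `{i} × ZMod p` with `v i ≠ 0`; so conjugating `g_v` into
`H_C` lands on some `g_{v'}` with `v'` of the same Hamming weight, nonzero since `g_v ≠ 1`. -/

section gperm

variable {p k : ℕ}

@[simp]
lemma gperm_zero : gperm (0 : Fin k → ZMod p) = 1 := by
  ext ⟨i, x⟩ <;> simp [gperm]

lemma gperm_injective : Function.Injective (gperm : (Fin k → ZMod p) → _) := by
  intro v w h
  funext i
  simpa [gperm] using congrArg (fun g => (g (i, 0)).2) h

lemma card_support_gperm [NeZero p] (v : Fin k → ZMod p) :
    (gperm v).support.card = hammingNorm v * p := by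
  have hsupport : (gperm v).support = Finset.univ.filter (v · ≠ 0) ×ˢ Finset.univ := by
    ext ⟨i, x⟩
    simp [Equiv.Perm.mem_support, gperm, Prod.ext_iff]
  rw [hsupport, Finset.card_product]
  simp [hammingNorm, ZMod.card]

lemma hammingNorm_eq_of_conj_gperm [NeZero p] {σ : Equiv.Perm (Fin k × ZMod p)}
    {v w : Fin k → ZMod p} (h : σ * gperm v * σ⁻¹ = gperm w) :
    hammingNorm w = hammingNorm v := by
  have hcard : (gperm w).support.card = (gperm v).support.card := by
    rw [← h, Equiv.Perm.support_conj, Finset.card_map]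
  rw [card_support_gperm, card_support_gperm] at hcard
  exact Nat.eq_of_mul_eq_mul_right (Nat.pos_of_neZero p) hcard

end gperm

theorem stmt13_general {p k : ℕ} (hp : p.Prime)
    (C : Submodule (ZMod p) (Fin k → ZMod p))
    (σ : Equiv.Perm (Fin k × ZMod p))
    (hσ : (fun g => σ * g * σ⁻¹) '' (Hsub C : Set (Equiv.Perm (Fin k × ZMod p)))
        = (Hsub C : Set (Equiv.Perm (Fin k × ZMod p))))
    (w₀ : ℕ)
    (v : Fin k → ZMod p) (hv : v ∈ C) (hv0 : v ≠ 0) (hvw : hammingNorm v = w₀) :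
    ∃ v' ∈ C, v' ≠ 0 ∧ hammingNorm v' = w₀ ∧ σ * gperm v * σ⁻¹ = gperm v' := by
  have : NeZero p := ⟨hp.ne_zero⟩
  obtain ⟨v', hv', hconj⟩ : σ * gperm v * σ⁻¹ ∈ (Hsub C : Set (Equiv.Perm (Fin k × ZMod p))) :=
    hσ ▸ Set.mem_image_of_mem _ ⟨v, hv, rfl⟩
  refine ⟨v', hv', ?_, hvw ▸ hammingNorm_eq_of_conj_gperm hconj, hconj⟩
  rintro rfl
  rw [gperm_zero, conj_eq_one_iff, ← gperm_zero] at hconj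
  exact hv0 (gperm_injective hconj)

/-- If `σ` normalizes `H_C` and `v ∈ C` is a nonzero codeword of minimal weight `w₀`, then
`σ * g_v * σ⁻¹ = g_{v'}` for some nonzero `v' ∈ C` of weight `w₀`. -/
theorem stmt13 {p k : ℕ} (hp : p.Prime)
    (C : Submodule (ZMod p) (Fin k → ZMod p))
    (σ : Equiv.Perm (Fin k × ZMod p))
    (hσ : (fun g => σ * g * σ⁻¹) '' (Hsub C : Set (Equiv.Perm (Fin k × ZMod p)))
        = (Hsub C : Set (Equiv.Perm (Fin k × ZMod p))))
    (w₀ : ℕ) (hw₀ : IsLeast {w : ℕ | ∃ v ∈ C, v ≠ 0 ∧ hammingNorm v = w} w₀)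
    (v : Fin k → ZMod p) (hv : v ∈ C) (hv0 : v ≠ 0) (hvw : hammingNorm v = w₀) :
    ∃ v' ∈ C, v' ≠ 0 ∧ hammingNorm v' = w₀ ∧ σ * gperm v * σ⁻¹ = gperm v' :=
  stmt13_general hp C σ hσ w₀ v hv hv0 hvw
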